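/- arXiv:1811.11043 — 3 statements merged into one kernel-verified Lean document; each statement's English description precedes it below -/
import Mathlib

section
/- Monotonicity of the filtered maximum: suppose each arm i has non-increasing means μ_i, window-averages μ̄_i^h(n_i), estimates satisfying |μ̂_i^h(n_i) − μ̄_i^h(n_i)| ≤ c(h) for all h, and the filter keeps K_{h+1} = {i ∈ K_h : μ̂_i^h ≥ max_{j∈K_h} μ̂_j^h − 2c(h)}. Then for all h' with h' + 1 ≤ min_{i∈K_{h'}} n_i, max_{i ∈ K_{h'+1}} μ̄_i^{h'+1}(n_i) ≥ max_{i ∈ K_{h'}} μ̄_i^{h'}(n_i). -/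
/-!
Let `i` maximise the true `h'`-window mean over `K_h`. Since every estimate is within `c h'` of
its true mean, `μ̂_j ≤ μ̄_j + c ≤ μ̄_i + c ≤ μ̂_i + 2c` for all `j ∈ K_h`, so `i` passes the filter.
Widening the window of `i` by one adds the oldest sample `μ_i(n_i - h' - 1)`, which by
monotonicity is at least every sample already in the window, so the mean can only grow.
-/

open Finset

/-- The paper's `μ̄^h(n)`. -/
noncomputable def windowMean (μ : ℕ → ℝ) (n h : ℕ) : ℝ :=
  (1 / (h : ℝ)) * ∑ j ∈ Icc 1 h, μ (n - j)

theorem windowMean_succ (μ : ℕ → ℝ) (n h : ℕ) :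
    windowMean μ n (h + 1) = (1 / ((h : ℝ) + 1)) * ∑ j ∈ Icc 1 (h + 1), μ (n - j) := by
  rw [windowMean, Nat.cast_succ]

theorem windowMean_le_windowMean_succ {μ : ℕ → ℝ} (hμ : Antitone μ) (n : ℕ) {h : ℕ}
    (hh : 0 < h) : windowMean μ n h ≤ windowMean μ n (h + 1) := by
  set S := ∑ j ∈ Icc 1 h, μ (n - j)
  set t := μ (n - (h + 1))
  have hsplit : ∑ j ∈ Icc 1 (h + 1), μ (n - j) = S + t := sum_Icc_succ_top (by omega) _
  have hS : S ≤ h * t := by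
    have hle : S ≤ #(Icc 1 h) • t :=
      sum_le_card_nsmul _ _ _ fun j hj => hμ (by have := (mem_Icc.mp hj).2; omega)
    simpa [nsmul_eq_mul] using hle
  have hpos : (0 : ℝ) < h := by exact_mod_cast hh
  rw [windowMean_succ, hsplit, windowMean, one_div_mul_eq_div, one_div_mul_eq_div,
    div_le_div_iff₀ hpos (by positivity)]
  nlinarith

theorem sup'_sub_two_mul_le_of_abs_sub_le {ι : Type*} {s : Finset ι} (hs : s.Nonempty)
    {f g : ι → ℝ} {c : ℝ} (hfg : ∀ j ∈ s, |g j - f j| ≤ c) {i : ι} (hi : i ∈ s)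
    (hmax : ∀ j ∈ s, f j ≤ f i) : s.sup' hs g - 2 * c ≤ g i := by
  have hgi := (abs_le.mp (hfg i hi)).1
  suffices s.sup' hs g ≤ f i + c by linarith
  refine sup'_le hs g fun j hj => ?_
  linarith [(abs_le.mp (hfg j hj)).2, hmax j hj]

theorem filtered_max_monotone_general {α : Type*}
    (μ : α → ℕ → ℝ) (hmono : ∀ i m, μ i (m + 1) ≤ μ i m)
    (n : α → ℕ) (c : ℕ → ℝ)
    (μhat : α → ℕ → ℝ)
    (h' : ℕ) (hh' : 1 ≤ h')
    (Kh : Finset α) (hne : Kh.Nonempty)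
    (hpulls : ∀ i ∈ Kh, h' + 1 ≤ n i)
    (hconc : ∀ i ∈ Kh, ∀ h, 1 ≤ h → h ≤ n i →
      |μhat i h - (1 / (h : ℝ)) * ∑ j ∈ Finset.Icc 1 h, μ i (n i - j)| ≤ c h)
    (Kh1 : Finset α)
    (hfilter : Kh1 = Kh.filter (fun i =>
      Kh.sup' hne (fun j => μhat j h') - 2 * c h' ≤ μhat i h')) :
    ∃ i ∈ Kh1,
      Kh.sup' hne (fun j => (1 / (h' : ℝ)) * ∑ l ∈ Finset.Icc 1 h', μ j (n j - l))
        ≤ (1 / ((h' : ℝ) + 1)) * ∑ l ∈ Finset.Icc 1 (h' + 1), μ i (n i - l) := by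
  let μbar : α → ℝ := fun j => windowMean (μ j) (n j) h'
  obtain ⟨i, hi, hsup⟩ := Kh.exists_mem_eq_sup' hne μbar
  have hconc' : ∀ j ∈ Kh, |μhat j h' - μbar j| ≤ c h' :=
    fun j hj => hconc j hj h' hh' (by linarith [hpulls j hj])
  refine ⟨i, ?_, ?_⟩
  · rw [hfilter, mem_filter]
    exact ⟨hi, sup'_sub_two_mul_le_of_abs_sub_le hne hconc' hi
      fun j hj => hsup ▸ le_sup' μbar hj⟩
  · rw [← windowMean_succ]
    exact hsup.le.trans
      (windowMean_le_windowMean_succ (antitone_nat_of_succ_le (hmono i)) (n i) hh')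

/-- Monotonicity of the filtered maximum of window averages. -/
theorem filtered_max_monotone {α : Type*} [DecidableEq α]
    (μ : α → ℕ → ℝ) (hmono : ∀ i m, μ i (m + 1) ≤ μ i m)
    (n : α → ℕ) (c : ℕ → ℝ) (hc : ∀ h, 0 ≤ c h)
    (μhat : α → ℕ → ℝ)
    (h' : ℕ) (hh' : 1 ≤ h')
    (Kh : Finset α) (hne : Kh.Nonempty)
    (hpulls : ∀ i ∈ Kh, h' + 1 ≤ n i)
    (hconc : ∀ i ∈ Kh, ∀ h, 1 ≤ h → h ≤ n i →
      |μhat i h - (1 / (h : ℝ)) * ∑ j ∈ Finset.Icc 1 h, μ i (n i - j)| ≤ c h)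
    (Kh1 : Finset α)
    (hfilter : Kh1 = Kh.filter (fun i =>
      Kh.sup' hne (fun j => μhat j h') - 2 * c h' ≤ μhat i h')) :
    ∃ i ∈ Kh1,
      Kh.sup' hne (fun j => (1 / (h' : ℝ)) * ∑ l ∈ Finset.Icc 1 h', μ j (n j - l))
        ≤ (1 / ((h' : ℝ) + 1)) * ∑ l ∈ Finset.Icc 1 (h' + 1), μ i (n i - l) :=
  filtered_max_monotone_general μ hmono n c μhat h' hh' Kh hne hpulls hconc Kh1 hfilter
end

section
/- Regret upper bound via over-pulls: with UP and OP as before, if μ⁺ ≥ μ_i(s) for every i ∈ UP and every s with N_i^π ≤ s ≤ N_i^⋆ − 1, then Σ_{i∈UP} Σ_{s=N_i^π}^{N_i^⋆−1} μ_i(s) − Σ_{i∈OP} Σ_{s=N_i^⋆}^{N_i^π−1} μ_i(s) ≤ Σ_{i∈OP} Σ_{h=0}^{N_i^π−N_i^⋆−1} (μ⁺ − μ_i(N_i^⋆ + h)). -/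
open Finset

/-! Pull counts are conserved, so the total number of extra pulls on under-pulled arms equals
the total number of surplus pulls on over-pulled arms. Each extra pull earns at most `μ⁺`, so
the gain on under-pulled arms is at most `μ⁺` times the total surplus; subtracting the rewards
actually collected by the surplus pulls gives the right-hand side. -/

theorem Finset.sum_tsub_comm_of_sum_eq {ι : Type*} {s : Finset ι} {f g : ι → ℕ}
    (h : ∑ i ∈ s, f i = ∑ i ∈ s, g i) :
    ∑ i ∈ s, (f i - g i) = ∑ i ∈ s, (g i - f i) := by
  have hmax : ∑ i ∈ s, (f i - g i) + ∑ i ∈ s, g i = ∑ i ∈ s, (g i - f i) + ∑ i ∈ s, f i := by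
    rw [← sum_add_distrib, ← sum_add_distrib]
    exact sum_congr rfl fun i _ => by omega
  omega

theorem Finset.sum_filter_lt_tsub_eq_of_sum_eq {ι : Type*} {s : Finset ι} {f g : ι → ℕ}
    (h : ∑ i ∈ s, f i = ∑ i ∈ s, g i) :
    ∑ i ∈ s with f i < g i, (g i - f i) = ∑ i ∈ s with g i < f i, (f i - g i) := by
  rw [sum_filter_of_ne fun i _ hi => by omega, sum_filter_of_ne fun i _ hi => by omega]
  exact (sum_tsub_comm_of_sum_eq h).symm

theorem Finset.sum_Ico_le_card_mul {f : ℕ → ℝ} {a b : ℕ} {M : ℝ}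
    (hf : ∀ s ∈ Ico a b, f s ≤ M) :
    ∑ s ∈ Ico a b, f s ≤ ((b - a : ℕ) : ℝ) * M := by
  simpa [Nat.card_Ico, nsmul_eq_mul] using sum_le_card_nsmul (Ico a b) f M hf

theorem Finset.sum_range_const_sub_eq (f : ℕ → ℝ) (a b : ℕ) (M : ℝ) :
    ∑ h ∈ range (b - a), (M - f (a + h)) = ((b - a : ℕ) : ℝ) * M - ∑ s ∈ Ico a b, f s := by
  rw [sum_sub_distrib, sum_const, card_range, nsmul_eq_mul, sum_Ico_eq_sum_range]

/-- Regret upper bound via over-pulls. -/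
theorem regret_upper_bound_via_overpulls (K T : ℕ) (μ : Fin K → ℕ → ℝ)
    (Npi Nstar : Fin K → ℕ)
    (hpi : ∑ i, Npi i = T) (hstar : ∑ i, Nstar i = T)
    (μplus : ℝ)
    (hup : ∀ i : Fin K, Npi i < Nstar i →
      ∀ s, Npi i ≤ s → s ≤ Nstar i - 1 → μ i s ≤ μplus) :
    (∑ i ∈ Finset.univ.filter (fun i => Npi i < Nstar i),
        ∑ s ∈ Finset.Ico (Npi i) (Nstar i), μ i s)
      - (∑ i ∈ Finset.univ.filter (fun i => Nstar i < Npi i),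
          ∑ s ∈ Finset.Ico (Nstar i) (Npi i), μ i s)
      ≤ ∑ i ∈ Finset.univ.filter (fun i => Nstar i < Npi i),
          ∑ h ∈ Finset.range (Npi i - Nstar i), (μplus - μ i (Nstar i + h)) := by
  have hsurplus : ∑ i with Npi i < Nstar i, ((Nstar i - Npi i : ℕ) : ℝ)
      = ∑ i with Nstar i < Npi i, ((Npi i - Nstar i : ℕ) : ℝ) := by
    exact_mod_cast sum_filter_lt_tsub_eq_of_sum_eq (hpi.trans hstar.symm)
  have hgain : ∑ i with Npi i < Nstar i, ∑ s ∈ Ico (Npi i) (Nstar i), μ i s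
      ≤ ∑ i with Nstar i < Npi i, ((Npi i - Nstar i : ℕ) : ℝ) * μplus := by
    rw [← sum_mul, ← hsurplus, sum_mul]
    refine sum_le_sum fun i hi => sum_Ico_le_card_mul fun s hs => ?_
    rw [mem_filter] at hi
    rw [mem_Ico] at hs
    exact hup i hi.2 s hs.1 (by omega)
  simp only [sum_range_const_sub_eq]
  rw [sum_sub_distrib]
  linarith
end

section
/- Greedy is near-optimal for deterministic rotting bandits: for K arms with non-increasing reward functions μ_i with per-step decay bounded by L (μ_i(n) − μ_i(n+1) ∈ [0, L]) and μ_i(0) ∈ [0, L], the greedy policy π that at each round pulls an arm maximizing the last observed reward μ_i(N_{i,t} − 1) (after pulling each arm once) suffers regret J^⋆ − J_T(π) ≤ L(K − 1) for every horizon T ≥ K, where J^⋆ is the maximum of Σ_i Σ_{s=0}^{N_i −1} μ_i(s) over allocations summing to T. -/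
/-!
Let `c i` be the number of greedy pulls of arm `i` up to the horizon and `x` the largest last
observed reward `μ j (c j - 1)`. Every pull of arm `i` after its first one was made while its
previous reward beat all current last rewards, which only decrease afterwards, so
`μ i s ≥ x` for `s + 1 < c i`; one decay step later, `μ i (c i - 1) ≥ x - L`, while
`μ i s ≤ x` for `s ≥ c i` by monotonicity. Hence against any allocation `N` with the same
total, each arm with `N i < c i` loses at most `L` beyond `(c i - N i) x`, every other arm gains
at most `(N i - c i) x`, and the `x`-terms cancel. As the totals agree, some arm has
`N i ≥ c i`, so at most `K - 1` arms lose the extra `L`.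
-/

open Finset

section Threshold

lemma sum_range_sub_sum_range_le_of_threshold (f : ℕ → ℝ) {c N : ℕ} {x L : ℝ}
    (hhi : ∀ s, c ≤ s → f s ≤ x) (hlo : ∀ s, s + 1 < c → x ≤ f s)
    (hlast : ∀ s, s + 1 = c → x - L ≤ f s) :
    ∑ s ∈ range N, f s - ∑ s ∈ range c, f s ≤ ((N : ℝ) - c) * x + if N < c then L else 0 := by
  rcases le_or_gt c N with hcN | hNc
  · have hgain : ∑ s ∈ Ico c N, f s ≤ (N - c : ℕ) • x := by
      simpa using sum_le_card_nsmul (Ico c N) f x fun s hs => hhi s (mem_Ico.mp hs).1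
    rw [← sum_Ico_eq_sub _ hcN, if_neg hcN.not_gt]
    rw [nsmul_eq_mul, Nat.cast_sub hcN] at hgain
    linarith
  · obtain ⟨m, rfl⟩ : ∃ m, c = m + 1 := Nat.exists_eq_add_one_of_ne_zero (by omega)
    have hNm : N ≤ m := by omega
    have hloss : (m - N : ℕ) • x ≤ ∑ s ∈ Ico N m, f s := by
      simpa using card_nsmul_le_sum (Ico N m) f x fun s hs => hlo s (by rw [mem_Ico] at hs; omega)
    have hsplit : ∑ s ∈ range (m + 1), f s - ∑ s ∈ range N, f s = ∑ s ∈ Ico N m, f s + f m := by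
      rw [← sum_Ico_eq_sub _ (by omega), sum_Ico_succ_top hNm]
    rw [if_pos hNc]
    rw [nsmul_eq_mul, Nat.cast_sub hNm] at hloss
    push_cast
    linarith [hlast m rfl]

variable {ι : Type*} [Fintype ι] [Nonempty ι]

lemma exists_le_of_sum_eq {c N : ι → ℕ} (hsum : ∑ i, N i = ∑ i, c i) : ∃ i, c i ≤ N i := by
  by_contra! h
  exact (sum_lt_sum_of_nonempty univ_nonempty fun i _ => h i).ne hsum

lemma sum_sub_sum_le_of_threshold (f : ι → ℕ → ℝ) {c N : ι → ℕ} {x L : ℝ} (hL : 0 ≤ L)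
    (hsum : ∑ i, N i = ∑ i, c i)
    (hhi : ∀ i s, c i ≤ s → f i s ≤ x) (hlo : ∀ i s, s + 1 < c i → x ≤ f i s)
    (hlast : ∀ i s, s + 1 = c i → x - L ≤ f i s) :
    ∑ i, ∑ s ∈ range (N i), f i s - ∑ i, ∑ s ∈ range (c i), f i s
      ≤ L * (Fintype.card ι - 1) := by
  classical
  set A := univ.filter fun i => N i < c i
  have hA : A.card + 1 ≤ Fintype.card ι := by
    obtain ⟨i, hi⟩ := exists_le_of_sum_eq hsum
    exact card_lt_univ_of_notMem (x := i) (by simpa [A] using hi)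
  have hx : ∑ i, ((N i : ℝ) - c i) * x = 0 := by
    rw [← sum_mul, sum_sub_distrib, ← Nat.cast_sum, ← Nat.cast_sum, hsum, sub_self, zero_mul]
  calc ∑ i, ∑ s ∈ range (N i), f i s - ∑ i, ∑ s ∈ range (c i), f i s
      ≤ ∑ i, (((N i : ℝ) - c i) * x + if N i < c i then L else 0) := by
        rw [← sum_sub_distrib]
        exact sum_le_sum fun i _ =>
          sum_range_sub_sum_range_le_of_threshold (f i) (hhi i) (hlo i) (hlast i)
    _ = A.card * L := by rw [sum_add_distrib, hx, zero_add, ← sum_filter, sum_const, nsmul_eq_mul]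
    _ ≤ L * (Fintype.card ι - 1) := by
        rw [mul_comm]
        gcongr
        rw [le_sub_iff_add_le]
        exact_mod_cast hA

end Threshold

section Greedy

variable {ι : Type*} [DecidableEq ι]

def pullCount (pulls : ℕ → ι) (t : ℕ) (i : ι) : ℕ :=
  ((range t).filter fun s => pulls s = i).card

lemma pullCount_zero (pulls : ℕ → ι) (i : ι) : pullCount pulls 0 i = 0 := by
  simp [pullCount]

lemma pullCount_succ (pulls : ℕ → ι) (t : ℕ) (i : ι) :
    pullCount pulls (t + 1) i = pullCount pulls t i + if pulls t = i then 1 else 0 := by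
  unfold pullCount
  rw [range_add_one, filter_insert]
  split_ifs
  · exact card_insert_of_notMem (by simp)
  · rfl

lemma pullCount_mono (pulls : ℕ → ι) (i : ι) : Monotone fun t => pullCount pulls t i :=
  fun _ _ h => card_le_card (filter_subset_filter _ (range_subset_range.mpr h))

lemma exists_pullCount_eq_of_lt {pulls : ℕ → ι} {T n : ℕ} {a : ι}
    (h : n < pullCount pulls T a) : ∃ t < T, pulls t = a ∧ pullCount pulls t a = n := by
  induction T with
  | zero => simp [pullCount_zero] at h
  | succ T ih =>
    rw [pullCount_succ] at h
    by_cases hn : n < pullCount pulls T a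
    · obtain ⟨t, htT, hpull⟩ := ih hn
      exact ⟨t, by omega, hpull⟩
    · have hT : pulls T = a := by by_contra hT; rw [if_neg hT] at h; omega
      simp only [hT, if_true] at h
      exact ⟨T, by omega, hT, by omega⟩

variable [Fintype ι]

lemma sum_pullCount (pulls : ℕ → ι) (t : ℕ) : ∑ i, pullCount pulls t i = t := by
  simpa [pullCount] using (card_eq_sum_card_fiberwise (f := pulls) (s := range t) (t := univ)
    fun _ _ => mem_univ _).symm

/-- `μ j (pullCount pulls t j - 1)` is the last reward observed from arm `j` before round `t`. -/
def IsGreedy (μ : ι → ℕ → ℝ) (pulls : ℕ → ι) (T : ℕ) : Prop :=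
  (∀ i, 1 ≤ pullCount pulls (Fintype.card ι) i) ∧
    ∀ t, Fintype.card ι ≤ t → t < T → ∀ j,
      μ j (pullCount pulls t j - 1) ≤ μ (pulls t) (pullCount pulls t (pulls t) - 1)

namespace IsGreedy

variable {μ : ι → ℕ → ℝ} {pulls : ℕ → ι} {T : ℕ}

lemma pullCount_card_eq_one (hπ : IsGreedy μ pulls T) (i : ι) :
    pullCount pulls (Fintype.card ι) i = 1 := by
  have hsum : ∑ j, pullCount pulls (Fintype.card ι) j = ∑ _j : ι, 1 := by
    simp [sum_pullCount]
  exact ((sum_eq_sum_iff_of_le fun j _ => hπ.1 j).mp hsum.symm i (mem_univ i)).symm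

/-- When `a` was pulled again after yielding `μ a n`, greedy ranked `μ a n` above every last
reward, and last rewards only decrease afterwards. -/
lemma lastReward_le (hπ : IsGreedy μ pulls T) (hμ : ∀ i, Antitone (μ i)) {a : ι} {n : ℕ}
    (hn : n + 1 < pullCount pulls T a) (j : ι) : μ j (pullCount pulls T j - 1) ≤ μ a n := by
  obtain ⟨t, htT, hpull, hcount⟩ := exists_pullCount_eq_of_lt hn
  have hwarm : Fintype.card ι ≤ t := by
    by_contra! ht
    have : pullCount pulls (t + 1) a ≤ pullCount pulls (Fintype.card ι) a :=
      pullCount_mono pulls a ht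
    rw [pullCount_succ, hpull, if_pos rfl, hcount, hπ.pullCount_card_eq_one] at this
    omega
  have hgreedy := hπ.2 t hwarm htT j
  rw [hpull, hcount, Nat.add_sub_cancel] at hgreedy
  exact (hμ j (Nat.sub_le_sub_right (pullCount_mono pulls j htT.le) 1)).trans hgreedy

end IsGreedy

end Greedy

theorem greedy_near_optimal_deterministic_rotting_general
    (K T : ℕ) (hK : 1 ≤ K)
    (L : ℝ) (hL : 0 ≤ L)
    (μ : Fin K → ℕ → ℝ)
    (hdecay : ∀ i n, 0 ≤ μ i n - μ i (n + 1) ∧ μ i n - μ i (n + 1) ≤ L)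
    (hinit : ∀ i, 0 ≤ μ i 0 ∧ μ i 0 ≤ L)
    (pulls : ℕ → Fin K)
    (cnt : ℕ → Fin K → ℕ)
    (hcnt : ∀ t i, cnt t i = ((Finset.range t).filter (fun s => pulls s = i)).card)
    (hfirst : ∀ i, 1 ≤ cnt K i)
    (hgreedy : ∀ t, K ≤ t → t < T → ∀ j : Fin K,
      μ j (cnt t j - 1) ≤ μ (pulls t) (cnt t (pulls t) - 1)) :
    ∀ N : Fin K → ℕ, (∑ i, N i = T) →
      (∑ i, ∑ s ∈ Finset.range (N i), μ i s)
        - (∑ i, ∑ s ∈ Finset.range (cnt T i), μ i s)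
        ≤ L * ((K : ℝ) - 1) := by
  intro N hN
  obtain rfl : cnt = pullCount pulls := funext₂ hcnt
  have : Nonempty (Fin K) := ⟨⟨0, hK⟩⟩
  have hμ : ∀ i, Antitone (μ i) := fun i =>
    antitone_nat_of_succ_le fun n => by linarith [(hdecay i n).1]
  have hπ : IsGreedy μ pulls T := ⟨by simpa using hfirst, by simpa using hgreedy⟩
  obtain ⟨j₀, hj₀⟩ := Finite.exists_max fun j => μ j (pullCount pulls T j - 1)
  set x := μ j₀ (pullCount pulls T j₀ - 1)
  have hlo : ∀ i s, s + 1 < pullCount pulls T i → x ≤ μ i s :=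
    fun i s hs => hπ.lastReward_le hμ hs j₀
  have hlast : ∀ i s, s + 1 = pullCount pulls T i → x - L ≤ μ i s
  | i, 0, _ => by linarith [hμ j₀ (Nat.zero_le (pullCount pulls T j₀ - 1)), hinit j₀, hinit i]
  | i, s + 1, hs => by linarith [hlo i s (by omega), (hdecay i s).2]
  simpa using sum_sub_sum_le_of_threshold μ hL (hN.trans (sum_pullCount pulls T).symm)
    (fun i s hs => (hμ i (Nat.sub_le_of_le_add (by omega))).trans (hj₀ i)) hlo hlast

/-- The greedy policy (pull each arm once, then always pull an arm whose
last observed mean reward is maximal) suffers regret at most `L (K - 1)` on any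
deterministic rotting bandit instance with decays bounded by `L`. -/
theorem greedy_near_optimal_deterministic_rotting
    (K T : ℕ) (hK : 1 ≤ K) (hKT : K ≤ T)
    (L : ℝ) (hL : 0 ≤ L)
    (μ : Fin K → ℕ → ℝ)
    (hdecay : ∀ i n, 0 ≤ μ i n - μ i (n + 1) ∧ μ i n - μ i (n + 1) ≤ L)
    (hinit : ∀ i, 0 ≤ μ i 0 ∧ μ i 0 ≤ L)
    (pulls : ℕ → Fin K)
    (cnt : ℕ → Fin K → ℕ)
    (hcnt : ∀ t i, cnt t i = ((Finset.range t).filter (fun s => pulls s = i)).card)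
    (hfirst : ∀ i, 1 ≤ cnt K i)
    (hgreedy : ∀ t, K ≤ t → t < T → ∀ j : Fin K,
      μ j (cnt t j - 1) ≤ μ (pulls t) (cnt t (pulls t) - 1)) :
    ∀ N : Fin K → ℕ, (∑ i, N i = T) →
      (∑ i, ∑ s ∈ Finset.range (N i), μ i s)
        - (∑ i, ∑ s ∈ Finset.range (cnt T i), μ i s)
        ≤ L * ((K : ℝ) - 1) :=
  greedy_near_optimal_deterministic_rotting_general K T hK L hL μ hdecay hinit pulls cnt hcnt hfirst
    hgreedy
end
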